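/- arXiv:2111.06965 — 3 statements merged into one kernel-verified Lean document; each statement's English description precedes it below -/
import Mathlib

section
/- In a commutative ring, any two decompositions of 1 as a finite sum of pairwise orthogonal primitive idempotents coincide up to a permutation: if 1 = e₁ + ⋯ + eₙ = f₁ + ⋯ + f_m with all eᵢ and fⱼ primitive idempotents, the eᵢ pairwise orthogonal and the fⱼ pairwise orthogonal, then n = m and there is a permutation σ with e_k = f_{σ(k)} for all k. -/
/-- A commutative ring is *connected* if it is nonzero and its only idempotent
elements are `0` and `1`. -/
def IsConnectedRing (S : Type u) [CommRing S] : Prop :=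
  Nontrivial S ∧ ∀ e : S, e * e = e → e = 0 ∨ e = 1

/-- A commutative ring is *semiconnected* if it is isomorphic to a finite direct
product of connected commutative rings. -/
def IsSemiconnectedRing (R : Type u) [CommRing R] : Prop :=
  ∃ (n : ℕ) (S : Fin n → CommRingCat.{u}),
    (∀ i, IsConnectedRing (S i)) ∧ Nonempty (R ≃+* ((i : Fin n) → S i))

/-- An idempotent `e` in a commutative ring is *primitive* if it is nonzero and
cannot be written as a sum of two nonzero orthogonal idempotents. -/
def IsPrimitiveIdempotent {R : Type u} [CommRing R] (e : R) : Prop :=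
  IsIdempotentElem e ∧ e ≠ 0 ∧
    ∀ a b : R, IsIdempotentElem a → IsIdempotentElem b → a * b = 0 →
      e = a + b → a = 0 ∨ b = 0

open Finset

lemma sum_orth_idem {R : Type u} [CommRing R] {ι : Type} [DecidableEq ι]
    (g : ι → R) (hg : ∀ i, IsIdempotentElem (g i))
    (hgo : ∀ i j, i ≠ j → g i * g j = 0) (s : Finset ι) :
    IsIdempotentElem (∑ i ∈ s, g i) := by
  unfold IsIdempotentElem
  rw [Finset.sum_mul_sum]
  refine Finset.sum_congr rfl fun i hi => ?_
  rw [Finset.sum_eq_single i (fun j _ hj => hgo i j (Ne.symm hj)) (fun h => (h hi).elim)]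
  exact hg i

lemma mul_sum_self {R : Type u} [CommRing R] {ι : Type} [DecidableEq ι]
    (g : ι → R) (hg : ∀ i, IsIdempotentElem (g i))
    (hgo : ∀ i j, i ≠ j → g i * g j = 0) {s : Finset ι} {j : ι} (hj : j ∈ s) :
    g j * ∑ i ∈ s, g i = g j := by
  rw [Finset.mul_sum, Finset.sum_eq_single j (fun i _ hi => hgo j i (Ne.symm hi))
    (fun h => (h hj).elim)]
  exact hg j

lemma key_lemma {R : Type u} [CommRing R] {ι : Type} [DecidableEq ι]
    (e : R) (he : IsPrimitiveIdempotent e)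
    (g : ι → R) (hg : ∀ i, IsIdempotentElem (g i))
    (hgo : ∀ i j, i ≠ j → g i * g j = 0) :
    ∀ s : Finset ι, e = ∑ i ∈ s, g i →
      ∃ i ∈ s, g i = e ∧ ∀ j ∈ s, j ≠ i → g j = 0 := by
  intro s
  induction s using Finset.induction_on with
  | empty => intro h; simp at h; exact absurd h he.2.1
  | @insert a s ha ih =>
    intro hsum
    rw [Finset.sum_insert ha] at hsum
    have horth : g a * ∑ i ∈ s, g i = 0 := by
      rw [Finset.mul_sum]
      exact Finset.sum_eq_zero fun i hi => hgo a i (fun h => ha (h ▸ hi))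
    rcases he.2.2 (g a) (∑ i ∈ s, g i) (hg a) (sum_orth_idem g hg hgo s) horth hsum with
      h0 | h0
    · have hsum' : e = ∑ i ∈ s, g i := by rw [hsum, h0, zero_add]
      obtain ⟨i, hi, hie, hz⟩ := ih hsum'
      exact ⟨i, Finset.mem_insert_of_mem hi, hie, fun j hj hji => by
        rcases Finset.mem_insert.mp hj with rfl | hj'
        · exact h0
        · exact hz j hj' hji⟩
    · refine ⟨a, Finset.mem_insert_self a s, by rw [hsum, h0, add_zero], ?_⟩
      intro j hj hja
      rcases Finset.mem_insert.mp hj with rfl | hj'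
      · exact absurd rfl hja
      · have := mul_sum_self g hg hgo hj'
        rw [h0, mul_zero] at this
        exact this.symm

lemma pick_lemma {R : Type u} [CommRing R] {n m : ℕ} (e : Fin n → R) (f : Fin m → R)
    (he : ∀ k, IsPrimitiveIdempotent (e k)) (hf : ∀ l, IsIdempotentElem (f l))
    (hfo : ∀ k l, k ≠ l → f k * f l = 0) (hfs : ∑ l, f l = 1) (k : Fin n) :
    ∃ l, e k * f l = e k ∧ ∀ j, j ≠ l → e k * f j = 0 := by
  have hg : ∀ l, IsIdempotentElem (e k * f l) := fun l => by
    unfold IsIdempotentElem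
    rw [mul_mul_mul_comm, (he k).1, (hf l)]
  have hgo : ∀ i j, i ≠ j → (e k * f i) * (e k * f j) = 0 := fun i j hij => by
    rw [mul_mul_mul_comm, hfo i j hij, mul_zero]
  have hsum : e k = ∑ l, e k * f l := by
    rw [← Finset.mul_sum, hfs, mul_one]
  obtain ⟨l, _, hl1, hl2⟩ := key_lemma (e k) (he k) (fun l => e k * f l) hg hgo
    Finset.univ hsum
  exact ⟨l, hl1, fun j hj => hl2 j (Finset.mem_univ j) hj⟩

/-- In a commutative ring, two decompositions of `1` as a finite sum of pairwise
orthogonal primitive idempotents coincide up to a permutation. -/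
theorem primitive_idempotent_decomposition_unique {R : Type u} [CommRing R]
    {n m : ℕ} (e : Fin n → R) (f : Fin m → R)
    (he : ∀ k, IsPrimitiveIdempotent (e k)) (hf : ∀ l, IsPrimitiveIdempotent (f l))
    (heo : ∀ k l, k ≠ l → e k * e l = 0) (hfo : ∀ k l, k ≠ l → f k * f l = 0)
    (hes : ∑ k, e k = 1) (hfs : ∑ l, f l = 1) :
    n = m ∧ ∃ σ : Fin n ≃ Fin m, ∀ k, e k = f (σ k) := by
  have hmain : ∀ k, ∃ l, e k * f l = e k ∧ ∀ j, j ≠ l → e k * f j = 0 :=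
    pick_lemma e f he (fun l => (hf l).1) hfo hfs
  have hmain' : ∀ l, ∃ k, f l * e k = f l ∧ ∀ j, j ≠ k → f l * e j = 0 :=
    pick_lemma f e hf (fun k => (he k).1) heo hes
  classical
  set σ : Fin n → Fin m := fun k => Classical.choose (hmain k) with hσ
  set τ : Fin m → Fin n := fun l => Classical.choose (hmain' l) with hτ
  have hσ1 : ∀ k, e k * f (σ k) = e k := fun k => (Classical.choose_spec (hmain k)).1
  have hσ2 : ∀ k j, j ≠ σ k → e k * f j = 0 := fun k => (Classical.choose_spec (hmain k)).2
  have hτ1 : ∀ l, f l * e (τ l) = f l := fun l => (Classical.choose_spec (hmain' l)).1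
  have hτ2 : ∀ l j, j ≠ τ l → f l * e j = 0 := fun l => (Classical.choose_spec (hmain' l)).2
  have hleft : ∀ k, τ (σ k) = k := by
    intro k
    by_contra hne
    have := hτ2 (σ k) k (fun h => hne (h ▸ rfl))
    rw [mul_comm, hσ1 k] at this
    exact (he k).2.1 this
  have hright : ∀ l, σ (τ l) = l := by
    intro l
    by_contra hne
    have := hσ2 (τ l) l (fun h => hne (h ▸ rfl))
    rw [mul_comm, hτ1 l] at this
    exact (hf l).2.1 this
  refine ⟨by simpa using Fintype.card_congr (⟨σ, τ, hleft, hright⟩ : Fin n ≃ Fin m),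
    ⟨σ, τ, hleft, hright⟩, ?_⟩
  intro k
  show e k = f (σ k)
  have h2 := hτ1 (σ k)
  rw [hleft k] at h2
  calc e k = e k * f (σ k) := (hσ1 k).symm
    _ = f (σ k) * e k := mul_comm _ _
    _ = f (σ k) := h2
end

section
/- Let 𝒜 be a monoidal additive category in which the unit object 𝟙 is indecomposable for direct sums. If a direct sum A ⊕ B of two objects is tensor-invertible (i.e., has a two-sided inverse up to isomorphism under ⊗), then A is tensor-invertible or B is tensor-invertible. -/
open CategoryTheory CategoryTheory.Limits MonoidalCategory

section Aux

variable {C : Type u} [Category.{v} C] [Preadditive C]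
    [HasBinaryBiproducts C] [MonoidalCategory C] [MonoidalPreadditive C]

noncomputable def aux_rightDistrib (A B V : C) : (A ⊞ B) ⊗ V ≅ (A ⊗ V) ⊞ (B ⊗ V) where
  hom := biprod.lift (biprod.fst ▷ V) (biprod.snd ▷ V)
  inv := biprod.desc (biprod.inl ▷ V) (biprod.inr ▷ V)
  hom_inv_id := by
    rw [biprod.lift_desc, ← comp_whiskerRight, ← comp_whiskerRight,
      ← MonoidalPreadditive.add_whiskerRight, biprod.total, id_whiskerRight]
  inv_hom_id := by
    ext <;> simp [← comp_whiskerRight]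

noncomputable def aux_leftDistrib (A B V : C) : V ⊗ (A ⊞ B) ≅ (V ⊗ A) ⊞ (V ⊗ B) where
  hom := biprod.lift (V ◁ biprod.fst) (V ◁ biprod.snd)
  inv := biprod.desc (V ◁ biprod.inl) (V ◁ biprod.inr)
  hom_inv_id := by
    rw [biprod.lift_desc, ← MonoidalCategory.whiskerLeft_comp, ← MonoidalCategory.whiskerLeft_comp,
      ← MonoidalPreadditive.whiskerLeft_add, biprod.total, MonoidalCategory.whiskerLeft_id]
  inv_hom_id := by
    ext <;> simp [← MonoidalCategory.whiskerLeft_comp]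

lemma aux_isZero_tensor_left {X : C} (h : IsZero X) (V : C) : IsZero (X ⊗ V) := by
  rw [IsZero.iff_id_eq_zero]
  calc 𝟙 (X ⊗ V) = (𝟙 X) ▷ V := by simp
  _ = (0 : X ⟶ X) ▷ V := by rw [h.eq_of_src (𝟙 X) 0]
  _ = 0 := MonoidalPreadditive.zero_whiskerRight

lemma aux_isZero_tensor_right {X : C} (h : IsZero X) (V : C) : IsZero (V ⊗ X) := by
  rw [IsZero.iff_id_eq_zero]
  calc 𝟙 (V ⊗ X) = V ◁ (𝟙 X) := by simp
  _ = V ◁ (0 : X ⟶ X) := by rw [h.eq_of_src (𝟙 X) 0]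
  _ = 0 := MonoidalPreadditive.whiskerLeft_zero

noncomputable def aux_biprod_zero_right {A B : C} (h : IsZero B) : A ⊞ B ≅ A where
  hom := biprod.fst
  inv := biprod.inl
  hom_inv_id := by
    ext <;> first | exact h.eq_of_src _ _ | simp
  inv_hom_id := by simp

noncomputable def aux_biprod_zero_left {A B : C} (h : IsZero A) : A ⊞ B ≅ B where
  hom := biprod.snd
  inv := biprod.inr
  hom_inv_id := by
    ext <;> first | exact h.eq_of_src _ _ | simp
  inv_hom_id := by simp

end Aux

/-- In a monoidal additive category whose unit is indecomposable for direct sums,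
if a direct sum `A ⊞ B` is tensor-invertible then `A` or `B` is tensor-invertible. -/
theorem tensor_invertible_of_biprod_invertible {C : Type u} [Category.{v} C] [Preadditive C]
    [HasBinaryBiproducts C] [MonoidalCategory C] [MonoidalPreadditive C]
    (hindec : ∀ E₁ E₂ : C, (𝟙_ C ≅ E₁ ⊞ E₂) → IsZero E₁ ∨ IsZero E₂)
    (A B V : C) (h₁ : (A ⊞ B) ⊗ V ≅ 𝟙_ C) (h₂ : V ⊗ (A ⊞ B) ≅ 𝟙_ C) :
    (∃ W : C, Nonempty (A ⊗ W ≅ 𝟙_ C) ∧ Nonempty (W ⊗ A ≅ 𝟙_ C)) ∨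
      (∃ W : C, Nonempty (B ⊗ W ≅ 𝟙_ C) ∧ Nonempty (W ⊗ B ≅ 𝟙_ C)) := by
  have dR : 𝟙_ C ≅ (A ⊗ V) ⊞ (B ⊗ V) := h₁.symm.trans (aux_rightDistrib A B V)
  have dL : 𝟙_ C ≅ (V ⊗ A) ⊞ (V ⊗ B) := h₂.symm.trans (aux_leftDistrib A B V)
  -- mixed-case handler: if one right-summand and the opposite left-summand vanish,
  -- then V is zero, the unit is zero, and everything is invertible.
  have mixed : IsZero ((A ⊗ V) ⊞ (B ⊗ V)) → False ∨ True := fun _ => Or.inr trivial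
  have key : ∀ (X Y : C), IsZero (X ⊗ V) → IsZero (V ⊗ Y) →
      (Y ⊗ V ≅ 𝟙_ C) → IsZero V := by
    intro X Y hXV hVY hYV
    -- V ≅ V ⊗ 𝟙 ≅ V ⊗ (Y ⊗ V) ≅ (V ⊗ Y) ⊗ V which is zero
    have : IsZero ((V ⊗ Y) ⊗ V) := aux_isZero_tensor_left hVY V
    have e : V ≅ (V ⊗ Y) ⊗ V :=
      (ρ_ V).symm.trans ((whiskerLeftIso V hYV.symm).trans (α_ V Y V).symm)
    exact this.of_iso e
  rcases hindec _ _ dR with hAV | hBV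
  · rcases hindec _ _ dL with hVA | hVB
    · -- both A-summands zero: B invertible
      right
      exact ⟨V, ⟨(aux_biprod_zero_left hAV).symm.trans dR.symm⟩,
        ⟨(aux_biprod_zero_left hVA).symm.trans dL.symm⟩⟩
    · -- IsZero (A ⊗ V), IsZero (V ⊗ B): then B⊗V ≅ 𝟙 and V⊗A ≅ 𝟙, V is zero
      have hBV1 : B ⊗ V ≅ 𝟙_ C := (aux_biprod_zero_left hAV).symm.trans dR.symm
      have hVzero : IsZero V := key A B hAV hVB hBV1
      have hunit : IsZero (𝟙_ C) := (aux_isZero_tensor_right hVzero (A ⊞ B)).of_iso h₁.symm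
      left
      exact ⟨V, ⟨(aux_isZero_tensor_right hVzero A).iso hunit⟩,
        ⟨(aux_isZero_tensor_left hVzero A).iso hunit⟩⟩
  · rcases hindec _ _ dL with hVA | hVB
    · -- IsZero (B ⊗ V), IsZero (V ⊗ A): A⊗V ≅ 𝟙, V zero
      have hAV1 : A ⊗ V ≅ 𝟙_ C := (aux_biprod_zero_right hBV).symm.trans dR.symm
      have hVzero : IsZero V := key B A hBV hVA hAV1
      have hunit : IsZero (𝟙_ C) := (aux_isZero_tensor_right hVzero (A ⊞ B)).of_iso h₁.symm
      left
      exact ⟨V, ⟨(aux_isZero_tensor_right hVzero A).iso hunit⟩,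
        ⟨(aux_isZero_tensor_left hVzero A).iso hunit⟩⟩
    · -- both B-summands zero: A invertible
      left
      exact ⟨V, ⟨(aux_biprod_zero_right hBV).symm.trans dR.symm⟩,
        ⟨(aux_biprod_zero_right hVB).symm.trans dL.symm⟩⟩
end

section
/- Let X, Y, Z be categories with functors I : Y → X, P : X → Y, J : Z → X, Q : X → Z, equipped with adjunctions P ⊣ I (unit η_Y, counit ε_Y), I ⊣ P (unit η̄_Y, counit ε̄_Y), Q ⊣ J (unit η_Z, counit ε_Z), J ⊣ Q (unit η̄_Z, counit ε̄_Z), satisfying ε_Y = η̄_Y⁻¹, ε_Z = η̄_Z⁻¹, and the whiskered identities (η_Y)(ε̄_Y) = id_{IP}, (η_Z)(ε̄_Z) = id_{JQ} (i.e. ε̄ is a section of η as endomorphisms of Id_X composing to the identity of IP resp. JQ). If the composite functor P∘J∘Q∘I : Y → Y is an equivalence, then the whiskered natural transformation P(ε̄_Z)I : P J Q I ⇒ P I is a natural isomorphism. -/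
open CategoryTheory

/-- Cutting down one categorified direct summand by another: if `Y` and `Z` are
splitting data for `X` (each simultaneously a reflection and coreflection via the
same functors, with `ε = η̄⁻¹` and `η ∘ ε̄ = id`), and the composite `P J Q I` is an
equivalence of `Y`, then the whiskering `P ε̄_Z I : P J Q I ⟹ P I` is a natural
isomorphism. -/
theorem whiskered_counit_isIso_of_composite_equivalence
    {X Y Z : Type u} [Category.{v} X] [Category.{v} Y] [Category.{v} Z]
    (I : Y ⥤ X) (P : X ⥤ Y) (J : Z ⥤ X) (Q : X ⥤ Z)
    (adjPI : P ⊣ I) (adjIP : I ⊣ P) (adjQJ : Q ⊣ J) (adjJQ : J ⊣ Q)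
    (hY₁ : ∀ y : Y, adjIP.unit.app y ≫ adjPI.counit.app y = 𝟙 y)
    (hY₂ : ∀ y : Y, adjPI.counit.app y ≫ adjIP.unit.app y = 𝟙 ((I ⋙ P).obj y))
    (hZ₁ : ∀ z : Z, adjJQ.unit.app z ≫ adjQJ.counit.app z = 𝟙 z)
    (hZ₂ : ∀ z : Z, adjQJ.counit.app z ≫ adjJQ.unit.app z = 𝟙 ((J ⋙ Q).obj z))
    (hYsec : ∀ x : X, adjIP.counit.app x ≫ adjPI.unit.app x = 𝟙 ((P ⋙ I).obj x))
    (hZsec : ∀ x : X, adjJQ.counit.app x ≫ adjQJ.unit.app x = 𝟙 ((Q ⋙ J).obj x))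
    (heq : (I ⋙ Q ⋙ J ⋙ P).IsEquivalence) :
    ∀ y : Y, IsIso (P.map (adjJQ.counit.app (I.obj y))) := by
  set E : Y ⥤ Y := I ⋙ Q ⋙ J ⋙ P with hE
  -- the natural transformation `ε : E ⟶ 𝟭 Y`
  let e : E ⟶ 𝟭 Y :=
    { app := fun a => P.map (adjJQ.counit.app (I.obj a)) ≫ adjPI.counit.app a
      naturality := by
        intro a b f
        have h1 := adjJQ.counit.naturality (I.map f)
        simp only [Functor.comp_map, Functor.id_map] at h1
        have h2 := adjPI.counit.naturality f
        simp only [Functor.comp_map, Functor.id_map] at h2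
        show P.map (J.map (Q.map (I.map f))) ≫
            P.map (adjJQ.counit.app (I.obj b)) ≫ adjPI.counit.app b =
          (P.map (adjJQ.counit.app (I.obj a)) ≫ adjPI.counit.app a) ≫ f
        rw [← Category.assoc, ← P.map_comp, h1, P.map_comp,
          Category.assoc, h2, Category.assoc] }
  -- its pointwise retraction `σ`
  let s : ∀ a : Y, a ⟶ E.obj a :=
    fun a => adjIP.unit.app a ≫ P.map (adjQJ.unit.app (I.obj a))
  have hes : ∀ a : Y, e.app a ≫ s a = 𝟙 (E.obj a) := by
    intro a
    show (P.map (adjJQ.counit.app (I.obj a)) ≫ adjPI.counit.app a) ≫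
      adjIP.unit.app a ≫ P.map (adjQJ.unit.app (I.obj a)) = 𝟙 _
    rw [Category.assoc, ← Category.assoc (adjPI.counit.app a), hY₂ a,
      Category.id_comp, ← P.map_comp, hZsec, P.map_id]
  -- `e.app (E.obj a)` is split epi
  have hse : ∀ a : Y, E.map (s a) ≫ e.app (E.obj a) = 𝟙 (E.obj a) := by
    intro a
    have := e.naturality (s a)
    simp only [Functor.id_map] at this
    rw [this, hes a]
  -- hence `e.app (E.obj a)` is iso
  have hiso : ∀ a : Y, IsIso (e.app (E.obj a)) := by
    intro a
    have hsσ : E.map (s a) = s (E.obj a) := by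
      have h1 : E.map (s a) = E.map (s a) ≫ e.app (E.obj a) ≫ s (E.obj a) := by
        rw [hes (E.obj a), Category.comp_id]
      rw [h1, ← Category.assoc, hse a, Category.id_comp]
    refine ⟨s (E.obj a), hes (E.obj a), ?_⟩
    rw [← hsσ, hse a]
    rfl
  -- every object is isomorphic to one of the form `E.obj a`
  intro y
  haveI := heq
  let eqv := E.asEquivalence
  let φ : E.obj (eqv.inverse.obj y) ≅ y := eqv.counitIso.app y
  have hnat : E.map φ.hom ≫ e.app y = e.app (E.obj (eqv.inverse.obj y)) ≫ φ.hom := by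
    have := e.naturality φ.hom
    simpa using this
  have h1 : IsIso (E.map φ.hom ≫ e.app y) := by
    rw [hnat]
    have := hiso (eqv.inverse.obj y)
    infer_instance
  have h2 : IsIso (e.app y) := by
    have : IsIso (E.map φ.hom) := inferInstance
    exact IsIso.of_isIso_comp_left (E.map φ.hom) (e.app y)
  -- finally transfer along the iso `adjPI.counit.app y`
  have hc : IsIso (adjPI.counit.app y) := ⟨adjIP.unit.app y, hY₂ y, hY₁ y⟩
  have hd : P.map (adjJQ.counit.app (I.obj y)) = e.app y ≫ inv (adjPI.counit.app y) := by
    show P.map (adjJQ.counit.app (I.obj y)) =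
      (P.map (adjJQ.counit.app (I.obj y)) ≫ adjPI.counit.app y) ≫ inv (adjPI.counit.app y)
    rw [Category.assoc, IsIso.hom_inv_id, Category.comp_id]
  rw [hd]
  infer_instance
end
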